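/- For all integers n ≥ 1 and 0 ≤ i ≤ n−1, in the ring R_n one has (Φ_i(x_{i+1}; x_1,…,x_i))^{2^{(n−1)−i}} = ε^{2^{n−1} − 2^i} · Φ_i(x_{i+1}; x_1,…,x_i). -/

import Mathlib

open MvPolynomial

/-- `Φ n x₀ x = ∏_{I ⊆ {1,…,n}} (x₀ + ∑_{i ∈ I} x i)`. -/
def Phi {R : Type*} [CommRing R] (n : ℕ) (x0 : R) (x : ℕ → R) : R :=
  ∏ I ∈ (Finset.Icc 1 n).powerset, (x0 + ∑ i ∈ I, x i)

/-- The ideal `I_m ⊆ 𝔽₂[x₁,…,x_m,ε]` generated by `x_j² − ε·x_j` for `j = 1,…,m`.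
The variables are indexed by `Fin (m+1)`: index `0` is `ε` and index `j ≠ 0` is `x_j`. -/
noncomputable def relIdeal (m : ℕ) : Ideal (MvPolynomial (Fin (m + 1)) (ZMod 2)) :=
  Ideal.span {f : MvPolynomial (Fin (m + 1)) (ZMod 2) |
    ∃ j : Fin (m + 1), j ≠ 0 ∧ f = X j ^ 2 - X 0 * X j}

/-- The ring `R_m = 𝔽₂[x₁,…,x_m,ε]/I_m`. -/
abbrev Rring (m : ℕ) := MvPolynomial (Fin (m + 1)) (ZMod 2) ⧸ relIdeal m

open Fin.NatCast in
/-- The image of the variable `x_j` (for `1 ≤ j ≤ m`) in `R_m`. -/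
noncomputable def xv (m : ℕ) (j : ℕ) : Rring m :=
  Ideal.Quotient.mk (relIdeal m) (X (j : Fin (m + 1)))

/-- The image of the variable `ε` in `R_m`. -/
noncomputable def eps (m : ℕ) : Rring m :=
  Ideal.Quotient.mk (relIdeal m) (X 0)

/-! In characteristic 2 the elements `a` with `a ^ 2 = e * a` are closed under addition, so every
factor `x_{i+1} + ∑_{j ∈ I} x_j` of `Φ_i` satisfies `f ^ 2 = ε f` in `R_n`. Squaring the product of
its `2 ^ i` factors gives `Φ ^ 2 = ε ^ (2 ^ i) Φ`, and iterating this `(n - 1) - i` times gives the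
claimed power of `ε`. -/

section SquareEqMul

variable {R : Type*} [CommRing R] {e : R}

theorem sq_add_eq_mul_add {a b : R} (h2 : (2 : R) = 0) (ha : a ^ 2 = e * a)
    (hb : b ^ 2 = e * b) : (a + b) ^ 2 = e * (a + b) := by
  linear_combination ha + hb + a * b * h2

theorem Finset.sum_sq_eq_mul_sum {ι : Type*} {s : Finset ι} {f : ι → R} (h2 : (2 : R) = 0)
    (hf : ∀ i ∈ s, f i ^ 2 = e * f i) : (∑ i ∈ s, f i) ^ 2 = e * ∑ i ∈ s, f i :=
  Finset.sum_induction f (fun a => a ^ 2 = e * a) (fun _ _ => sq_add_eq_mul_add h2)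
    (by simp) hf

theorem Phi_sq_eq_pow_mul (h2 : (2 : R) = 0) (n : ℕ) {x0 : R} {x : ℕ → R}
    (hx0 : x0 ^ 2 = e * x0) (hx : ∀ j ∈ Finset.Icc 1 n, x j ^ 2 = e * x j) :
    Phi n x0 x ^ 2 = e ^ 2 ^ n * Phi n x0 x := by
  have hfactor : ∀ I ∈ (Finset.Icc 1 n).powerset,
      (x0 + ∑ i ∈ I, x i) ^ 2 = e * (x0 + ∑ i ∈ I, x i) := fun I hI =>
    sq_add_eq_mul_add h2 hx0
      (Finset.sum_sq_eq_mul_sum h2 fun j hj => hx j (Finset.mem_powerset.mp hI hj))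
  rw [Phi, ← Finset.prod_pow, Finset.prod_congr rfl hfactor, Finset.prod_mul_distrib,
    Finset.prod_const, Finset.card_powerset, Nat.card_Icc, Nat.add_sub_cancel]

end SquareEqMul

theorem pow_two_pow_of_sq_eq_mul {M : Type*} [CommMonoid M] {c y : M} (h : y ^ 2 = c * y)
    (k : ℕ) : y ^ 2 ^ k = c ^ (2 ^ k - 1) * y := by
  induction k with
  | zero => simp
  | succ k ih =>
    have hk : 2 ^ k * 2 - 1 = (2 ^ k - 1) * 2 + 1 := by
      have := Nat.one_le_two_pow (n := k)
      omega
    rw [pow_succ, pow_mul, ih, mul_pow, h, hk, pow_succ c, pow_mul, mul_assoc]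

theorem Rring.two_eq_zero (m : ℕ) : (2 : Rring m) = 0 := by
  rw [← map_ofNat (algebraMap (ZMod 2) (Rring m)) 2, show (2 : ZMod 2) = 0 from rfl, map_zero]

open Fin.NatCast in
theorem xv_sq (m : ℕ) {j : ℕ} (h1 : 1 ≤ j) (h2 : j ≤ m) : xv m j ^ 2 = eps m * xv m j := by
  rw [xv, eps, ← map_pow, ← map_mul, Ideal.Quotient.eq]
  refine Ideal.subset_span ⟨j, fun hj => ?_, rfl⟩
  have hval : ((j : Fin (m + 1)) : ℕ) = j := Fin.val_cast_of_lt (by omega)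
  rw [hj, Fin.val_zero] at hval
  omega

/-- For all `n ≥ 1` and `0 ≤ i ≤ n−1`, in `R_n` one has
`(Φ_i(x_{i+1}; x₁,…,x_i))^{2^{(n−1)−i}} = ε^{2^{n−1} − 2^i} · Φ_i(x_{i+1}; x₁,…,x_i)`. -/
theorem stmt12 (n : ℕ) (hn : 1 ≤ n) (i : ℕ) (hi : i ≤ n - 1) :
    (Phi i (xv n (i + 1)) (xv n)) ^ (2 ^ ((n - 1) - i))
      = eps n ^ (2 ^ (n - 1) - 2 ^ i) * Phi i (xv n (i + 1)) (xv n) := by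
  have hsq : Phi i (xv n (i + 1)) (xv n) ^ 2 = eps n ^ 2 ^ i * Phi i (xv n (i + 1)) (xv n) :=
    Phi_sq_eq_pow_mul (Rring.two_eq_zero n) i (xv_sq n (by omega) (by omega))
      fun j hj => xv_sq n (Finset.mem_Icc.mp hj).1 (by have := (Finset.mem_Icc.mp hj).2; omega)
  have hexp : 2 ^ i * (2 ^ (n - 1 - i) - 1) = 2 ^ (n - 1) - 2 ^ i := by
    rw [Nat.mul_sub, mul_one, ← pow_add, Nat.add_sub_cancel' hi]
  rw [pow_two_pow_of_sq_eq_mul hsq, ← pow_mul, hexp]
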